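/- arXiv:0707.0022 — 2 statements merged into one kernel-verified Lean document; each statement's English description precedes it below -/
import Mathlib

section
/- Under the hypotheses of the previous determinant identity (M symmetric positive definite 2×2, q₁, q₂ unit vectors), the 6×6 block matrix [[M₁₁ I₃, −M₁₂ q̂₁ q̂₁],[−M₁₂ q̂₂ q̂₂, M₂₂ I₃]] is invertible. -/
/-! The off-diagonal blocks are, up to the scalar `-M₀₁`, products `q̂ q̂` of hat maps of unit
vectors, hence contractions by Lagrange's identity `|q × v|² = |q|²|v|² - (q·v)²`. A kernel vector
`(x, y)` then satisfies `M₀₀|x| ≤ |M₀₁||y|` and `M₁₁|y| ≤ |M₀₁||x|`, which together with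
`M₀₁² < M₀₀M₁₁` force `x = y = 0`. -/

open Matrix

/-- The hat map: `hat q` is the skew matrix with `(hat q).mulVec v = q ×₃ v`. -/
def hat (q : Fin 3 → ℝ) : Matrix (Fin 3) (Fin 3) ℝ :=
  !![0, -q 2, q 1; q 2, 0, -q 0; -q 1, q 0, 0]

namespace Matrix

variable {n K : Type*} [Fintype n] [Field K] [LinearOrder K]

theorem dotProduct_self_nonneg [IsStrictOrderedRing K] (v : n → K) : 0 ≤ v ⬝ᵥ v :=
  Finset.sum_nonneg fun i _ => mul_self_nonneg (v i)

def IsContraction (A : Matrix n n K) : Prop :=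
  ∀ v, A *ᵥ v ⬝ᵥ A *ᵥ v ≤ v ⬝ᵥ v

theorem IsContraction.mul {A B : Matrix n n K} (hA : A.IsContraction) (hB : B.IsContraction) :
    (A * B).IsContraction := fun v => by
  rw [← mulVec_mulVec]
  exact (hA _).trans (hB v)

theorem IsContraction.sq_mul_dotProduct_self_le [IsStrictOrderedRing K] {A : Matrix n n K}
    (hA : A.IsContraction) {a b : K} {x y : n → K} (h : a • x + b • A *ᵥ y = 0) :
    a ^ 2 * (x ⬝ᵥ x) ≤ b ^ 2 * (y ⬝ᵥ y) := by
  rw [add_eq_zero_iff_eq_neg] at h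
  calc a ^ 2 * (x ⬝ᵥ x) = (a • x) ⬝ᵥ (a • x) := by
        simp only [smul_dotProduct, dotProduct_smul, smul_eq_mul]; ring
    _ = b ^ 2 * (A *ᵥ y ⬝ᵥ A *ᵥ y) := by
        rw [h]; simp only [neg_dotProduct, dotProduct_neg, smul_dotProduct, dotProduct_smul,
          smul_eq_mul]; ring
    _ ≤ b ^ 2 * (y ⬝ᵥ y) := mul_le_mul_of_nonneg_left (hA y) (sq_nonneg b)

theorem isUnit_fromBlocks_smul_one [IsStrictOrderedRing K] [DecidableEq n] {A B : Matrix n n K}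
    (hA : A.IsContraction) (hB : B.IsContraction) {a b c d : K}
    (h : (b * c) ^ 2 < (a * d) ^ 2) :
    IsUnit (fromBlocks (a • 1) (b • A) (c • B) (d • 1)) := by
  rw [isUnit_iff_isUnit_det, isUnit_iff_ne_zero, Ne, ← exists_mulVec_eq_zero_iff]
  rintro ⟨v, hv0, hv⟩
  set x := v ∘ Sum.inl
  set y := v ∘ Sum.inr
  have hx : a • x + b • A *ᵥ y = 0 := by
    simpa [fromBlocks_mulVec, smul_mulVec] using congrArg (· ∘ Sum.inl) hv
  have hy : d • y + c • B *ᵥ x = 0 := by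
    simpa [fromBlocks_mulVec, smul_mulVec, add_comm] using congrArg (· ∘ Sum.inr) hv
  have hx' := hA.sq_mul_dotProduct_self_le hx
  have hy' := hB.sq_mul_dotProduct_self_le hy
  -- chaining the two bounds gives `(a d)² |x|² ≤ (b c)² |x|²`, and symmetrically for `y`
  have hx0 : x ⬝ᵥ x ≤ 0 := by
    nlinarith [mul_le_mul_of_nonneg_left hx' (sq_nonneg d),
      mul_le_mul_of_nonneg_left hy' (sq_nonneg b), dotProduct_self_nonneg x]
  have hy0 : y ⬝ᵥ y ≤ 0 := by
    nlinarith [mul_le_mul_of_nonneg_left hy' (sq_nonneg a),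
      mul_le_mul_of_nonneg_left hx' (sq_nonneg c), dotProduct_self_nonneg y]
  have hxz : x = 0 := dotProduct_self_eq_zero.1 (hx0.antisymm (dotProduct_self_nonneg x))
  have hyz : y = 0 := dotProduct_self_eq_zero.1 (hy0.antisymm (dotProduct_self_nonneg y))
  exact hv0 (funext fun | .inl i => congrFun hxz i | .inr i => congrFun hyz i)

end Matrix

theorem hat_mulVec (q v : Fin 3 → ℝ) : hat q *ᵥ v = q ⨯₃ v := by
  ext i; fin_cases i <;> simp [hat, cross_apply, mulVec, dotProduct, Fin.sum_univ_three] <;> ring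

theorem isContraction_hat {q : Fin 3 → ℝ} (hq : q ⬝ᵥ q = 1) : (hat q).IsContraction := fun v => by
  rw [hat_mulVec, cross_dot_cross, hq, one_mul, dotProduct_comm v q]
  nlinarith [sq_nonneg (q ⬝ᵥ v)]

theorem Matrix.PosDef.sq_apply_zero_one_lt {M : Matrix (Fin 2) (Fin 2) ℝ} (hM : M.PosDef) :
    M 0 1 ^ 2 < M 0 0 * M 1 1 := by
  have hsym : M 1 0 = M 0 1 := by simpa using hM.isHermitian.apply 0 1
  have := hM.det_pos
  rw [det_fin_two, hsym] at this
  linarith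

theorem stmt10 (M : Matrix (Fin 2) (Fin 2) ℝ) (hM : M.PosDef)
    (q1 q2 : Fin 3 → ℝ) (h1 : q1 ⬝ᵥ q1 = 1) (h2 : q2 ⬝ᵥ q2 = 1) :
    IsUnit (Matrix.fromBlocks (M 0 0 • (1 : Matrix (Fin 3) (Fin 3) ℝ))
      (-(M 0 1) • (hat q1 * hat q1)) (-(M 0 1) • (hat q2 * hat q2))
      (M 1 1 • (1 : Matrix (Fin 3) (Fin 3) ℝ))) := by
  refine isUnit_fromBlocks_smul_one ((isContraction_hat h1).mul (isContraction_hat h1))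
    ((isContraction_hat h2).mul (isContraction_hat h2)) ?_
  have hM01 := hM.sq_apply_zero_one_lt
  rw [neg_mul_neg, mul_pow, mul_pow, ← sq]
  nlinarith [sq_nonneg (M 0 1)]
end

section
/- For unit vectors q₁, q₂ ∈ ℝ³ and a symmetric positive definite 2×2 matrix M, det [[M₁₁ I₃, −M₁₂ q̂₁ q̂₂],[−M₁₂ q̂₂ q̂₁, M₂₂ I₃]] = det [[M₁₁ I₃, −M₁₂ q̂₁ q̂₁],[−M₁₂ q̂₂ q̂₂, M₂₂ I₃]], i.e. the two 6×6 block matrices appearing in the position and angular-velocity forms of the Euler–Lagrange equations have equal determinants. -/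
/-!
Since `M₀₀ > 0`, taking the Schur complement of the block `M₀₀ I` turns both determinants into
`M₀₀³ det (M₁₁ I - k X)` with `k = M₀₁² / M₀₀` and `X = q̂₂ q̂₁ q̂₁ q̂₂`, resp. `X = q̂₂ q̂₂ q̂₁ q̂₁`.
These two products are cyclic rearrangements of each other, and `AB`, `BA` have the same
characteristic polynomial.
-/

open Matrix

namespace Matrix

variable {m n R K : Type*} [Fintype m] [DecidableEq m] [Fintype n] [DecidableEq n]

theorem scalar_eq_smul_one [Semiring R] (a : R) : scalar n a = a • (1 : Matrix n n R) := by
  rw [smul_one_eq_diagonal, scalar_apply]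

theorem det_smul_one_sub_smul_mul_comm [CommRing R] (t k : R) (A B : Matrix n n R) :
    det (t • 1 - k • (A * B)) = det (t • 1 - k • (B * A)) := by
  rw [← Matrix.smul_mul, ← Matrix.mul_smul, ← scalar_eq_smul_one, ← eval_charpoly,
    ← eval_charpoly, charpoly_mul_comm]

theorem det_fromBlocks_smul_one₁₁ [Field K] {a : K} (ha : a ≠ 0) (B : Matrix m n K)
    (C : Matrix n m K) (D : Matrix n n K) :
    det (fromBlocks (a • 1) B C D) = a ^ Fintype.card m * det (D - a⁻¹ • (C * B)) := by
  let : Invertible a := invertibleOfNonzero ha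
  let : Invertible (scalar m a) := Invertible.map (scalar m) a
  rw [← scalar_eq_smul_one, det_fromBlocks₁₁, ← map_invOf, invOf_eq_inv, scalar_eq_smul_one,
    det_smul, det_one, mul_one, scalar_eq_smul_one, Matrix.mul_smul, Matrix.mul_one,
    Matrix.smul_mul]

theorem det_fromBlocks_smul_one_mul_comm [Field K] {a : K} (ha : a ≠ 0) (c d : K)
    (P Q : Matrix n n K) :
    det (fromBlocks (a • 1) (c • (P * Q)) (c • (Q * P)) (d • 1)) =
      det (fromBlocks (a • 1) (c • (P * P)) (c • (Q * Q)) (d • 1)) := by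
  have schur (X Y : Matrix n n K) : a⁻¹ • ((c • X) * (c • Y)) = (a⁻¹ * c * c) • (X * Y) := by
    rw [Matrix.smul_mul, Matrix.mul_smul, smul_smul, smul_smul, mul_assoc]
  have reassoc : Q * P * (P * Q) = Q * (P * P * Q) := by simp only [Matrix.mul_assoc]
  rw [det_fromBlocks_smul_one₁₁ ha, det_fromBlocks_smul_one₁₁ ha, schur, schur, reassoc,
    det_smul_one_sub_smul_mul_comm _ _ Q, det_smul_one_sub_smul_mul_comm _ _ (Q * Q),
    Matrix.mul_assoc]

end Matrix

theorem stmt11_general (M : Matrix (Fin 2) (Fin 2) ℝ) (hM : M.PosDef)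
    (q1 q2 : Fin 3 → ℝ) :
    (Matrix.fromBlocks (M 0 0 • (1 : Matrix (Fin 3) (Fin 3) ℝ)) (-(M 0 1) • (hat q1 * hat q2))
        (-(M 0 1) • (hat q2 * hat q1)) (M 1 1 • (1 : Matrix (Fin 3) (Fin 3) ℝ))).det =
      (Matrix.fromBlocks (M 0 0 • (1 : Matrix (Fin 3) (Fin 3) ℝ)) (-(M 0 1) • (hat q1 * hat q1))
        (-(M 0 1) • (hat q2 * hat q2)) (M 1 1 • (1 : Matrix (Fin 3) (Fin 3) ℝ))).det :=
  det_fromBlocks_smul_one_mul_comm hM.diag_pos.ne' _ _ _ _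

theorem stmt11 (M : Matrix (Fin 2) (Fin 2) ℝ) (hM : M.PosDef)
    (q1 q2 : Fin 3 → ℝ) (h1 : q1 ⬝ᵥ q1 = 1) (h2 : q2 ⬝ᵥ q2 = 1) :
    (Matrix.fromBlocks (M 0 0 • (1 : Matrix (Fin 3) (Fin 3) ℝ)) (-(M 0 1) • (hat q1 * hat q2))
        (-(M 0 1) • (hat q2 * hat q1)) (M 1 1 • (1 : Matrix (Fin 3) (Fin 3) ℝ))).det =
      (Matrix.fromBlocks (M 0 0 • (1 : Matrix (Fin 3) (Fin 3) ℝ)) (-(M 0 1) • (hat q1 * hat q1))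
        (-(M 0 1) • (hat q2 * hat q2)) (M 1 1 • (1 : Matrix (Fin 3) (Fin 3) ℝ))).det :=
  stmt11_general M hM q1 q2
end
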